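/- Let Ω ⊆ ℝ³ be open with coordinates (x, y, t), and let u : Ω → ℝ be a C² function satisfying u_t (u_x³ − u_y³) u_{xy} + u_y (u_t³ − u_x³) u_{xt} + u_x (u_y³ − u_t³) u_{yt} = 0 on Ω. Then ∂_t ( u_x u_y (u_x³ − u_y³) ) + ∂_y ( u_x u_t (u_t³ − u_x³) ) + ∂_x ( u_y u_t (u_y³ − u_t³) ) = 0 on Ω. -/

import Mathlib

/-!
By the chain rule each flux `F(a, b) = a b (a³ - b³)`, evaluated at a pair of first derivatives
of `u`, differentiates to a combination of mixed second derivatives of `u` only. Once mixed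
partials are identified by symmetry of the second derivative, the divergence is exactly `-4`
times the left-hand side of the equation.
-/

/-- Partial derivative of `f : ℝⁿ → ℝ` in the `i`-th coordinate direction. -/
noncomputable def pd {n : ℕ} (i : Fin n) (f : (Fin n → ℝ) → ℝ) (x : Fin n → ℝ) : ℝ :=
  fderiv ℝ f x (Pi.single i 1)

section
variable {n : ℕ} {X : Fin n → ℝ}

lemma pd_flux {f g : (Fin n → ℝ) → ℝ} (hf : DifferentiableAt ℝ f X)
    (hg : DifferentiableAt ℝ g X) (k : Fin n) :
    pd k (fun Y => f Y * g Y * (f Y ^ 3 - g Y ^ 3)) X =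
      (4 * f X ^ 3 * g X - g X ^ 4) * pd k f X + (f X ^ 4 - 4 * f X * g X ^ 3) * pd k g X := by
  have H : HasFDerivAt (fun Y => f Y * g Y * (f Y ^ 3 - g Y ^ 3)) _ X :=
    (hf.hasFDerivAt.mul hg.hasFDerivAt).mul ((hf.hasFDerivAt.pow 3).sub (hg.hasFDerivAt.pow 3))
  rw [pd, H.fderiv, pd, pd]
  simp only [add_apply, smul_apply, sub_apply, smul_eq_mul, nsmul_eq_mul, Pi.mul_apply]
  push_cast
  ring

lemma hasFDerivAt_pd {u : (Fin n → ℝ) → ℝ} (h : DifferentiableAt ℝ (fderiv ℝ u) X) (i : Fin n) :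
    HasFDerivAt (pd i u)
      ((ContinuousLinearMap.apply ℝ ℝ (Pi.single i 1)).comp (fderiv ℝ (fderiv ℝ u) X)) X := by
  unfold pd
  exact (ContinuousLinearMap.apply ℝ ℝ (Pi.single i 1)).hasFDerivAt.comp X h.hasFDerivAt

lemma ContDiffAt.differentiableAt_fderiv {u : (Fin n → ℝ) → ℝ} (h : ContDiffAt ℝ 2 u X) :
    DifferentiableAt ℝ (fderiv ℝ u) X :=
  (h.fderiv_right (m := 1) le_rfl).differentiableAt one_ne_zero

lemma differentiableAt_pd {u : (Fin n → ℝ) → ℝ} (h : ContDiffAt ℝ 2 u X) (i : Fin n) :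
    DifferentiableAt ℝ (pd i u) X :=
  (hasFDerivAt_pd h.differentiableAt_fderiv i).differentiableAt

lemma pd_pd_comm {u : (Fin n → ℝ) → ℝ} (h : ContDiffAt ℝ 2 u X) (i j : Fin n) :
    pd j (pd i u) X = pd i (pd j u) X := by
  rw [pd, (hasFDerivAt_pd h.differentiableAt_fderiv i).fderiv, pd,
    (hasFDerivAt_pd h.differentiableAt_fderiv j).fderiv]
  exact h.isSymmSndFDerivAt (by simp) _ _

end

/-- Every solution of
`u_t(u_x³−u_y³)u_{xy} + u_y(u_t³−u_x³)u_{xt} + u_x(u_y³−u_t³)u_{yt} = 0`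
satisfies the conservation law
`(u_x u_y(u_x³−u_y³))_t + (u_x u_t(u_t³−u_x³))_y + (u_y u_t(u_y³−u_t³))_x = 0`.
Coordinates on `ℝ³` are `x = 0`, `y = 1`, `t = 2`. -/
theorem degenerate_elliptic_equation_conservation_law
    (Ω : Set (Fin 3 → ℝ)) (hΩ : IsOpen Ω)
    (u : (Fin 3 → ℝ) → ℝ) (hu : ContDiffOn ℝ 2 u Ω)
    (heq : ∀ X ∈ Ω,
      pd 2 u X * ((pd 0 u X) ^ 3 - (pd 1 u X) ^ 3) * pd 1 (pd 0 u) X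
        + pd 1 u X * ((pd 2 u X) ^ 3 - (pd 0 u X) ^ 3) * pd 2 (pd 0 u) X
        + pd 0 u X * ((pd 1 u X) ^ 3 - (pd 2 u X) ^ 3) * pd 2 (pd 1 u) X = 0) :
    ∀ X ∈ Ω,
      pd 2 (fun Y => pd 0 u Y * pd 1 u Y * ((pd 0 u Y) ^ 3 - (pd 1 u Y) ^ 3)) X
        + pd 1 (fun Y => pd 0 u Y * pd 2 u Y * ((pd 2 u Y) ^ 3 - (pd 0 u Y) ^ 3)) X
        + pd 0 (fun Y => pd 1 u Y * pd 2 u Y * ((pd 1 u Y) ^ 3 - (pd 2 u Y) ^ 3)) X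
        = 0 := by
  intro X hX
  have hu2 : ContDiffAt ℝ 2 u X := hu.contDiffAt (hΩ.mem_nhds hX)
  have hd := differentiableAt_pd hu2
  have hswap : (fun Y => pd 0 u Y * pd 2 u Y * (pd 2 u Y ^ 3 - pd 0 u Y ^ 3))
      = fun Y => pd 2 u Y * pd 0 u Y * (pd 2 u Y ^ 3 - pd 0 u Y ^ 3) := by
    funext Y; ring
  rw [hswap, pd_flux (hd 0) (hd 1), pd_flux (hd 2) (hd 0), pd_flux (hd 1) (hd 2),
    pd_pd_comm hu2 2 1, pd_pd_comm hu2 1 0, pd_pd_comm hu2 2 0]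
  linear_combination (-4 : ℝ) * heq X hX
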